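/- The measure with density 1/(1+xy)^2 on [0,1]×[-1,1] is invariant under the natural extension of the even Gauss map T̄_e(x,y) = (T_e(x), ε₁(x)/(a₁(x)+y)), where a₁(x) = 2k and ε₁(x) = +1 for x ∈ (1/(2k+1), 1/(2k)], ε₁(x) = -1 for x ∈ (1/(2k), 1/(2k-1)]. -/

import Mathlib

open MeasureTheory

/-- The natural extension of the even Gauss map on [0,1]×[-1,1]. -/
noncomputable def evenGaussNatExt (p : ℝ × ℝ) : ℝ × ℝ :=
  if p.1 = 0 then (0, p.2)
  else
    let a : ℝ := 2 * (round (1/(2*p.1)) : ℤ)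
    let e : ℝ := if 0 ≤ 1/p.1 - a then 1 else -1
    (e * (1/p.1 - a), e / (a + p.2))

/-- The measure with density 1/(1+xy)² on [0,1]×[-1,1]. -/
noncomputable def evenGaussMeasure : Measure (ℝ × ℝ) :=
  ((volume : Measure (ℝ × ℝ)).restrict (Set.Icc 0 1 ×ˢ Set.Icc (-1) 1)).withDensity
    (fun p => ENNReal.ofReal (1 / (1 + p.1 * p.2)^2))

/-!
Split `(0,1] × [-1,1)` into the cylinders on which `a₁ = 2k` and `ε₁ = ±1`. On each of them `T̄_e`
is the map `(x, y) ↦ (ε(1/x - 2k), ε/(2k + y))`, whose Jacobian `1/(x(2k + y))²` is compensated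
exactly by the density, because `1 + x'y' = (1 + xy)/(x(2k + y))`. The second coordinate
`ε/(2k + y)` of an image point determines `ε` (its sign) and `2k` (the even integer nearest to its
inverse absolute value), so `T̄_e` is injective on the union of the cylinders, and it maps this
union onto the square up to a null set. The change of variables formula on each cylinder, summed
over the cylinders, gives the invariance.
-/

open Set Function
open scoped ENNReal

theorem ContinuousOn.measurableSet_inter_preimage {α β : Type*} [TopologicalSpace α]
    [MeasurableSpace α] [OpensMeasurableSpace α] [TopologicalSpace β] [MeasurableSpace β]
    [BorelSpace β] {f : α → β} {s : Set α} {t : Set β} (hf : ContinuousOn f s)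
    (hs : MeasurableSet s) (ht : MeasurableSet t) : MeasurableSet (s ∩ f ⁻¹' t) := by
  rw [← Subtype.image_preimage_coe]
  exact hs.subtype_image (hf.domRestrict.measurable ht)

section ChangeOfVariables

variable {E : Type*} [NormedAddCommGroup E] [NormedSpace ℝ E] [FiniteDimensional ℝ E]
  [MeasurableSpace E] [BorelSpace E] {μ : Measure E} [μ.IsAddHaarMeasure]

theorem withDensity_preimage_eq_of_piecewise_injOn {ι : Type*} [Countable ι] {T : E → E}
    {T' : ι → E → E →L[ℝ] E} {ρ : E → ℝ≥0∞} {R : Set E} {P : ι → Set E}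
    (hP : ∀ i, MeasurableSet (P i)) (hPd : Pairwise (Disjoint on P))
    (hT' : ∀ i, ∀ x ∈ P i, HasFDerivWithinAt T (T' i x) (P i) x)
    (hT : InjOn T (⋃ i, P i))
    (hρ : ∀ i, ∀ x ∈ P i, ENNReal.ofReal |(T' i x).det| * ρ (T x) = ρ x)
    (hPR : ⋃ i, P i =ᵐ[μ] R) (hTR : T '' ⋃ i, P i =ᵐ[μ] R) {A : Set E} (hA : MeasurableSet A) :
    (μ.restrict R).withDensity ρ (T ⁻¹' A) = (μ.restrict R).withDensity ρ A := by
  have hTi (i : ι) : InjOn T (P i) := hT.mono (subset_iUnion P i)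
  have hTA (i : ι) : MeasurableSet (T ⁻¹' A ∩ P i) := by
    rw [inter_comm]
    exact ContinuousOn.measurableSet_inter_preimage
      (fun x hx => (hT' i x hx).continuousWithinAt) (hP i) hA
  have hpiece (i : ι) : ∫⁻ x in T ⁻¹' A ∩ P i, ρ x ∂μ = ∫⁻ x in A ∩ T '' P i, ρ x ∂μ := by
    rw [← image_preimage_inter, lintegral_image_eq_lintegral_abs_det_fderiv_mul μ (hTA i)
      (fun x hx => (hT' i x hx.2).mono inter_subset_right) ((hTi i).mono inter_subset_right)]
    exact setLIntegral_congr_fun (hTA i) fun x hx => (hρ i x hx.2).symm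
  have hTP (i : ι) : MeasurableSet (A ∩ T '' P i) :=
    hA.inter (measurable_image_of_fderivWithin (hP i) (hT' i) (hTi i))
  have hTPd : Pairwise (Disjoint on fun i => A ∩ T '' P i) := fun i j hij => by
    refine Disjoint.mono inter_subset_right inter_subset_right ?_
    rw [disjoint_iff_inter_eq_empty, ← hT.image_inter (subset_iUnion P i) (subset_iUnion P j),
      disjoint_iff_inter_eq_empty.mp (hPd hij), image_empty]
  rw [withDensity_apply' _ _, withDensity_apply _ hA]
  calc ∫⁻ x in T ⁻¹' A, ρ x ∂μ.restrict R
      = ∫⁻ x in T ⁻¹' A ∩ ⋃ i, P i, ρ x ∂μ := by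
        rw [← Measure.restrict_congr_set hPR, Measure.restrict_restrict' (MeasurableSet.iUnion hP)]
    _ = ∑' i, ∫⁻ x in T ⁻¹' A ∩ P i, ρ x ∂μ := by
        rw [inter_iUnion]
        exact lintegral_iUnion hTA
          (fun i j hij => (hPd hij).mono inter_subset_right inter_subset_right) _
    _ = ∑' i, ∫⁻ x in A ∩ T '' P i, ρ x ∂μ := tsum_congr hpiece
    _ = ∫⁻ x in A ∩ T '' ⋃ i, P i, ρ x ∂μ := by
        rw [image_iUnion, inter_iUnion]
        exact (lintegral_iUnion hTP hTPd _).symm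
    _ = ∫⁻ x in A, ρ x ∂μ.restrict R := by
        rw [Measure.restrict_restrict hA]
        exact setLIntegral_congr (Filter.EventuallyEq.rfl.inter hTR)

end ChangeOfVariables

noncomputable def gaussBranch (a e : ℝ) (p : ℝ × ℝ) : ℝ × ℝ := (e * (p.1⁻¹ - a), e / (a + p.2))

noncomputable def gaussBranchInv (a e : ℝ) (q : ℝ × ℝ) : ℝ × ℝ := ((a + e * q.1)⁻¹, e / q.2 - a)

noncomputable def gaussBranchDeriv (a e : ℝ) (p : ℝ × ℝ) : ℝ × ℝ →L[ℝ] ℝ × ℝ :=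
  ((1 : ℝ →L[ℝ] ℝ).smulRight (-e / p.1 ^ 2)).prodMap
    ((1 : ℝ →L[ℝ] ℝ).smulRight (-e / (a + p.2) ^ 2))

section Branch

variable {a e : ℝ}

theorem gaussBranch_gaussBranchInv (he : e * e = 1) (q : ℝ × ℝ) :
    gaussBranch a e (gaussBranchInv a e q) = q := by
  have he0 : e ≠ 0 := left_ne_zero_of_mul_eq_one he
  ext
  · simp only [gaussBranch, gaussBranchInv, inv_inv, add_sub_cancel_left, ← mul_assoc, he, one_mul]
  · simp only [gaussBranch, gaussBranchInv, add_sub_cancel, div_div_cancel₀ he0]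

theorem leftInverse_gaussBranchInv (he : e * e = 1) :
    LeftInverse (gaussBranchInv a e) (gaussBranch a e) := by
  have he0 : e ≠ 0 := left_ne_zero_of_mul_eq_one he
  intro p
  ext
  · simp only [gaussBranch, gaussBranchInv, ← mul_assoc, he, one_mul, add_sub_cancel, inv_inv]
  · simp only [gaussBranch, gaussBranchInv, div_div_cancel₀ he0, add_sub_cancel_left]

theorem hasFDerivAt_gaussBranch {p : ℝ × ℝ} (hx : p.1 ≠ 0) (hy : a + p.2 ≠ 0) :
    HasFDerivAt (gaussBranch a e) (gaussBranchDeriv a e p) p := by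
  have h₁ : HasDerivAt (fun x : ℝ => e * (x⁻¹ - a)) (-e / p.1 ^ 2) p.1 := by
    simpa [neg_div, div_eq_mul_inv] using ((hasDerivAt_inv hx).sub_const a).const_mul e
  have h₂ : HasDerivAt (fun y : ℝ => e / (a + y)) (-e / (a + p.2) ^ 2) p.2 := by
    simpa [neg_div, div_eq_mul_inv] using
      (((hasDerivAt_id p.2).const_add a).inv hy).const_mul e
  exact h₁.hasFDerivAt.prodMap p h₂.hasFDerivAt

theorem det_gaussBranchDeriv (p : ℝ × ℝ) :
    (gaussBranchDeriv a e p).det = -e / p.1 ^ 2 * (-e / (a + p.2) ^ 2) := by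
  simp [gaussBranchDeriv, ContinuousLinearMap.det, LinearMap.det_prodMap]

theorem abs_det_gaussBranchDeriv_mul_density (he : e * e = 1) {p : ℝ × ℝ} (hx : p.1 ≠ 0)
    (hy : a + p.2 ≠ 0) :
    |(gaussBranchDeriv a e p).det| *
        (1 / (1 + (gaussBranch a e p).1 * (gaussBranch a e p).2) ^ 2) =
      1 / (1 + p.1 * p.2) ^ 2 := by
  have hdet : (gaussBranchDeriv a e p).det = 1 / (p.1 * (a + p.2)) ^ 2 := by
    rw [det_gaussBranchDeriv]
    field_simp
    linear_combination he
  have hprod : 1 + (gaussBranch a e p).1 * (gaussBranch a e p).2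
      = (1 + p.1 * p.2) / (p.1 * (a + p.2)) := by
    simp only [gaussBranch]
    field_simp
    linear_combination (1 - p.1 * a) * he
  rw [hdet, abs_of_nonneg (by positivity), hprod, div_pow, one_div_div]
  field_simp

end Branch

def branchSign (b : Bool) : ℝ := if b then 1 else -1

theorem branchSign_mul_self (b : Bool) : branchSign b * branchSign b = 1 := by
  cases b <;> norm_num [branchSign]

def signInterval : Bool → Set ℝ
  | true => Ico 0 1
  | false => Ico (-1) 0

theorem mem_signInterval_iff {w : ℝ} {b : Bool} :
    w ∈ signInterval b ↔ w ∈ Ico (-1) 1 ∧ (0 ≤ w ↔ b) := by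
  cases b <;> simp only [signInterval, mem_Ico] <;> constructor <;> grind

theorem branchSign_mul_mem_Icc {w : ℝ} {b : Bool} (hw : w ∈ signInterval b) :
    branchSign b * w ∈ Icc 0 1 := by
  cases b <;> simp only [signInterval, mem_Ico] at hw <;> simp only [branchSign] <;>
    constructor <;> grind

theorem branchSign_mul_mem_signInterval {u : ℝ} (hu : u ∈ Ioo 0 1) (b : Bool) :
    branchSign b * u ∈ signInterval b := by
  cases b <;> simp only [signInterval, branchSign, mem_Ico] <;> constructor <;> grind

theorem natFloor_add_one_div_two_eq_iff {s : ℝ} (hs : -1 ≤ s) {k : ℕ} :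
    ⌊(s + 1) / 2⌋₊ = k ↔ s - 2 * k ∈ Ico (-1) 1 := by
  rw [Nat.floor_eq_iff (by linarith), mem_Ico]
  constructor <;> rintro ⟨h₁, h₂⟩ <;> constructor <;> linarith

/-- `evenCylinder (k, true) = (1/(2k+1), 1/(2k)] × [-1, 1)` and
`evenCylinder (k, false) = (1/(2k), 1/(2k-1)] × [-1, 1)`: the points where `a₁ = 2k` and
`ε₁ = ±1` (empty for `k = 0`). The `y`-interval is half open so that the images of the cylinders
are disjoint. -/
def evenCylinder (i : ℕ × Bool) : Set (ℝ × ℝ) :=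
  (Ioc 0 1 ∩ (fun x : ℝ => x⁻¹ - 2 * i.1) ⁻¹' signInterval i.2) ×ˢ Ico (-1) 1

theorem measurableSet_evenCylinder (i : ℕ × Bool) : MeasurableSet (evenCylinder i) := by
  refine (measurableSet_Ioc.inter ((measurable_inv.sub_const _) ?_)).prod measurableSet_Ico
  cases i.2 <;> exact measurableSet_Ico

/-- The cylinder containing `p`, read off the second coordinate `ε₁/(2k + y)` of `T̄_e p`. -/
noncomputable def cylinderOfSnd (v : ℝ) : ℕ × Bool := (⌊(|v|⁻¹ + 1) / 2⌋₊, decide (0 < v))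

section EvenCylinder

variable {i : ℕ × Bool} {p : ℝ × ℝ}

theorem sub_mem_Ico_of_mem_evenCylinder (hp : p ∈ evenCylinder i) :
    p.1⁻¹ - 2 * i.1 ∈ Ico (-1) 1 :=
  (mem_signInterval_iff.1 hp.1.2).1

theorem one_le_two_mul_add_snd_of_mem_evenCylinder (hp : p ∈ evenCylinder i) :
    1 ≤ 2 * (i.1 : ℝ) + p.2 := by
  have hw := (sub_mem_Ico_of_mem_evenCylinder hp).2
  obtain ⟨⟨⟨hx₀, hx₁⟩, -⟩, hy, -⟩ := hp
  have hk : 0 < i.1 := by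
    have := (one_le_inv₀ hx₀).2 hx₁
    exact_mod_cast (show (0 : ℝ) < i.1 by linarith)
  have : (1 : ℝ) ≤ i.1 := by exact_mod_cast hk
  linarith

theorem evenGaussNatExt_eqOn_evenCylinder (i : ℕ × Bool) :
    EqOn evenGaussNatExt (gaussBranch (2 * i.1) (branchSign i.2)) (evenCylinder i) := by
  intro p hp
  obtain ⟨⟨hw₁, hw₂⟩, hsign⟩ := mem_signInterval_iff.1 hp.1.2
  have hx : p.1 ≠ 0 := hp.1.1.1.ne'
  have hround : round (2 * p.1)⁻¹ = i.1 := by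
    rw [round_eq, Int.floor_eq_iff, mul_inv]
    push_cast
    constructor <;> linarith
  have he : (if 0 ≤ p.1⁻¹ - 2 * (i.1 : ℝ) then (1 : ℝ) else -1) = branchSign i.2 := by
    cases hb : i.2 <;> simp_all [branchSign]
  simp only [evenGaussNatExt, hx, if_false, one_div, hround, Int.cast_natCast, he, gaussBranch]


theorem pairwise_disjoint_evenCylinder : Pairwise (Disjoint on evenCylinder) := by
  rintro ⟨k, b⟩ ⟨l, c⟩ hne
  refine disjoint_left.2 fun p hp hq => hne ?_
  have hs : -1 ≤ p.1⁻¹ := by linarith [inv_pos.2 hp.1.1.1]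
  obtain rfl : k = l := ((natFloor_add_one_div_two_eq_iff hs).2
    (sub_mem_Ico_of_mem_evenCylinder hp)).symm.trans
    ((natFloor_add_one_div_two_eq_iff hs).2 (sub_mem_Ico_of_mem_evenCylinder hq))
  have hb := (mem_signInterval_iff.1 hp.1.2).2
  have hc := (mem_signInterval_iff.1 hq.1.2).2
  exact Prod.ext rfl (Bool.eq_iff_iff.2 (hb.symm.trans hc))

theorem iUnion_evenCylinder : ⋃ i, evenCylinder i = Ioc 0 1 ×ˢ Ico (-1) 1 := by
  refine Subset.antisymm (iUnion_subset fun i => prod_mono inter_subset_left Subset.rfl) ?_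
  rintro p ⟨hx, hy⟩
  have hs : -1 ≤ p.1⁻¹ := by linarith [inv_pos.2 hx.1]
  set k := ⌊(p.1⁻¹ + 1) / 2⌋₊
  have hw := (natFloor_add_one_div_two_eq_iff hs).1 (rfl : k = k)
  exact mem_iUnion.2 ⟨(k, decide (0 ≤ p.1⁻¹ - 2 * k)),
    ⟨hx, mem_signInterval_iff.2 ⟨hw, by simp⟩⟩, hy⟩

theorem abs_snd_gaussBranch (hp : p ∈ evenCylinder i) :
    |(gaussBranch (2 * i.1) (branchSign i.2) p).2| = (2 * i.1 + p.2)⁻¹ := by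
  have hz := one_le_two_mul_add_snd_of_mem_evenCylinder hp
  rw [gaussBranch, abs_div, abs_of_pos (by linarith : 0 < 2 * (i.1 : ℝ) + p.2), inv_eq_one_div]
  congr
  cases i.2 <;> simp [branchSign]

theorem cylinderOfSnd_gaussBranch (hp : p ∈ evenCylinder i) :
    cylinderOfSnd (gaussBranch (2 * i.1) (branchSign i.2) p).2 = i := by
  have hz := one_le_two_mul_add_snd_of_mem_evenCylinder hp
  refine Prod.ext ?_ ?_
  · rw [cylinderOfSnd, abs_snd_gaussBranch hp, inv_inv]
    exact (natFloor_add_one_div_two_eq_iff (by linarith)).2 (by simpa using hp.2)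
  · have : 0 < 2 * (i.1 : ℝ) + p.2 := by linarith
    obtain ⟨k, _ | _⟩ := i <;> simp_all [cylinderOfSnd, gaussBranch, branchSign]

theorem mem_evenCylinder_gaussBranchInv {q : ℝ × ℝ} (hq : q ∈ Ioo 0 1 ×ˢ (Icc (-1) 1 \ {0}))
    (hi : cylinderOfSnd q.2 = i) :
    gaussBranchInv (2 * i.1) (branchSign i.2) q ∈ evenCylinder i := by
  obtain ⟨hu, ⟨hv₁, hv₂⟩, hv₀⟩ := hq
  subst hi
  dsimp only [cylinderOfSnd]
  set k := ⌊(|q.2|⁻¹ + 1) / 2⌋₊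
  have hs : 1 ≤ |q.2|⁻¹ := (one_le_inv₀ (abs_pos.2 hv₀)).2 (abs_le.2 ⟨hv₁, hv₂⟩)
  have hw := (natFloor_add_one_div_two_eq_iff (by linarith)).1 (rfl : k = k)
  have hk : (1 : ℝ) ≤ k := by
    have : 0 < k := by exact_mod_cast (show (0 : ℝ) < k by linarith [hw.2])
    exact_mod_cast this
  have hev : branchSign (decide (0 < q.2)) / q.2 = |q.2|⁻¹ := by
    rcases lt_or_gt_of_ne hv₀ with h | h
    · simp [branchSign, h.not_gt, abs_of_neg h, neg_div]
    · simp [branchSign, h, abs_of_pos h]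
  have hu' := branchSign_mul_mem_signInterval hu (decide (0 < q.2))
  have hx : 1 ≤ 2 * k + branchSign (decide (0 < q.2)) * q.1 := by
    linarith [(mem_signInterval_iff.1 hu').1.1]
  refine ⟨⟨⟨inv_pos.2 (by linarith), inv_le_one_of_one_le₀ hx⟩, ?_⟩, ?_⟩
  · simpa [gaussBranchInv] using hu'
  · simpa [gaussBranchInv, hev] using hw

theorem injOn_evenGaussNatExt : InjOn evenGaussNatExt (⋃ i, evenCylinder i) := by
  intro p hp q hq h
  obtain ⟨i, hp⟩ := mem_iUnion.1 hp
  obtain ⟨j, hq⟩ := mem_iUnion.1 hq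
  rw [evenGaussNatExt_eqOn_evenCylinder i hp, evenGaussNatExt_eqOn_evenCylinder j hq] at h
  obtain rfl : i = j := by rw [← cylinderOfSnd_gaussBranch hp, h, cylinderOfSnd_gaussBranch hq]
  exact (leftInverse_gaussBranchInv (branchSign_mul_self _)).injective h

theorem image_evenGaussNatExt_ae_eq :
    evenGaussNatExt '' ⋃ i, evenCylinder i =ᵐ[volume] Icc 0 1 ×ˢ Icc (-1) 1 := by
  have hsub : evenGaussNatExt '' ⋃ i, evenCylinder i ⊆ Icc 0 1 ×ˢ Icc (-1) 1 := by
    rintro _ ⟨p, hp, rfl⟩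
    obtain ⟨i, hp⟩ := mem_iUnion.1 hp
    have hz := one_le_two_mul_add_snd_of_mem_evenCylinder hp
    rw [evenGaussNatExt_eqOn_evenCylinder i hp]
    refine ⟨branchSign_mul_mem_Icc hp.1.2, abs_le.1 ?_⟩
    rw [abs_snd_gaussBranch hp]
    exact inv_le_one_of_one_le₀ hz
  have hsup : Ioo 0 1 ×ˢ (Icc (-1) 1 \ {0}) ⊆ evenGaussNatExt '' ⋃ i, evenCylinder i := by
    intro q hq
    have hp := mem_evenCylinder_gaussBranchInv hq rfl
    refine ⟨_, mem_iUnion.2 ⟨_, hp⟩, ?_⟩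
    rw [evenGaussNatExt_eqOn_evenCylinder _ hp, gaussBranch_gaussBranchInv (branchSign_mul_self _)]
  have hae : (Ioo 0 1 ×ˢ (Icc (-1) 1 \ {0}) : Set (ℝ × ℝ)) =ᵐ[volume] Icc 0 1 ×ˢ Icc (-1) 1 :=
    Measure.set_prod_ae_eq Ioo_ae_eq_Icc (sdiff_null_ae_eq_self (measure_singleton 0))
  exact hsub.eventuallyLE.antisymm (hae.symm.le.trans hsup.eventuallyLE)

theorem hasFDerivWithinAt_evenGaussNatExt (hp : p ∈ evenCylinder i) :
    HasFDerivWithinAt evenGaussNatExt (gaussBranchDeriv (2 * i.1) (branchSign i.2) p)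
      (evenCylinder i) p := by
  have hz := one_le_two_mul_add_snd_of_mem_evenCylinder hp
  exact (hasFDerivAt_gaussBranch hp.1.1.1.ne' (by linarith)).hasFDerivWithinAt.congr
    (evenGaussNatExt_eqOn_evenCylinder i) (evenGaussNatExt_eqOn_evenCylinder i hp)

theorem ofReal_abs_det_mul_density_evenGaussNatExt (hp : p ∈ evenCylinder i) :
    ENNReal.ofReal |(gaussBranchDeriv (2 * i.1) (branchSign i.2) p).det| *
        ENNReal.ofReal (1 / (1 + (evenGaussNatExt p).1 * (evenGaussNatExt p).2) ^ 2) =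
      ENNReal.ofReal (1 / (1 + p.1 * p.2) ^ 2) := by
  have hz := one_le_two_mul_add_snd_of_mem_evenCylinder hp
  rw [← ENNReal.ofReal_mul (abs_nonneg _), evenGaussNatExt_eqOn_evenCylinder i hp,
    abs_det_gaussBranchDeriv_mul_density (branchSign_mul_self _) hp.1.1.1.ne' (by linarith)]

end EvenCylinder

theorem evenGaussNatExt_invariant :
    ∀ A : Set (ℝ × ℝ), MeasurableSet A →
      evenGaussMeasure (evenGaussNatExt ⁻¹' A) = evenGaussMeasure A := by
  intro A hA
  have hcover : ⋃ i, evenCylinder i =ᵐ[volume] Icc 0 1 ×ˢ Icc (-1) 1 := by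
    rw [iUnion_evenCylinder]
    exact Measure.set_prod_ae_eq Ioc_ae_eq_Icc Ico_ae_eq_Icc
  exact withDensity_preimage_eq_of_piecewise_injOn measurableSet_evenCylinder
    pairwise_disjoint_evenCylinder (fun _ _ => hasFDerivWithinAt_evenGaussNatExt)
    injOn_evenGaussNatExt (fun _ _ => ofReal_abs_det_mul_density_evenGaussNatExt) hcover
    image_evenGaussNatExt_ae_eq hA
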